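/- arXiv:1305.7207 — 3 statements merged into one kernel-verified Lean document; each statement's English description precedes it below -/
import Mathlib

section
/- For integers k,m,r ≥ 1 with 1/k + 1/m + 1/r ≤ 1, if P, Q, R ∈ ℂ[X] are univariate polynomials satisfying P^k + Q^m = R^r and P, Q, R have no common irreducible factor (are setwise coprime), then P, Q, R are all constant. -/
/-!
Common factors pass between the three terms of `P ^ k + Q ^ m = R ^ r`, so setwise coprimality of
`P, Q, R` already makes them pairwise coprime. If one of them vanishes, coprimality with zero forces
the other two to be units. Otherwise the nonsolvability of the Fermat–Catalan equation in
`Polynomial.flt_catalan`, a consequence of Mason–Stothers, applies once `1/k + 1/m + 1/r ≤ 1` is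
cleared of denominators.
-/

open Polynomial

theorem Nat.mul_add_mul_add_mul_le_mul_mul_of_one_div_add_le_one {p q r : ℕ} (hp : p ≠ 0)
    (hq : q ≠ 0) (hr : r ≠ 0) (h : (1 : ℚ) / p + 1 / q + 1 / r ≤ 1) :
    q * r + r * p + p * q ≤ p * q * r := by
  field_simp at h
  norm_cast at h
  linarith

namespace Polynomial

variable {K : Type*} [Field K]

theorem isCoprime_of_forall_irreducible_not_dvd {A B : K[X]}
    (H : ∀ q : K[X], Irreducible q → q ∣ A → ¬q ∣ B) : IsCoprime A B :=
  isCoprime_of_irreducible_dvd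
    (fun ⟨hA, hB⟩ => H X irreducible_X (hA ▸ dvd_zero X) (hB ▸ dvd_zero X)) H

theorem isCoprime_of_dvd_pow_of_no_common_irreducible_factor {A B C : K[X]} {n : ℕ}
    (hdvd : ∀ q : K[X], q ∣ A → q ∣ B → q ∣ C ^ n)
    (hcop : ¬∃ q : K[X], Irreducible q ∧ q ∣ A ∧ q ∣ B ∧ q ∣ C) : IsCoprime A B :=
  isCoprime_of_forall_irreducible_not_dvd fun q hq hA hB =>
    hcop ⟨q, hq, hA, hB, hq.prime.dvd_of_dvd_pow (hdvd q hA hB)⟩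

theorem natDegree_eq_zero_of_isCoprime_of_eq_zero {A B C : K[X]} (hAB : IsCoprime A B)
    (hBC : IsCoprime B C) (hCA : IsCoprime C A) (h0 : A = 0 ∨ B = 0 ∨ C = 0) :
    A.natDegree = 0 ∧ B.natDegree = 0 ∧ C.natDegree = 0 := by
  rcases h0 with rfl | rfl | rfl <;>
    simp_all only [isCoprime_zero_left, isCoprime_zero_right, natDegree_zero,
      natDegree_eq_zero_of_isUnit, and_self]

end Polynomial

/-- Mason–Stothers corollary: if `1/k + 1/m + 1/r ≤ 1` and `P^k + Q^m = R^r` with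
`P, Q, R ∈ ℂ[X]` having no common irreducible factor, then `P, Q, R` are all constant. -/
theorem masonStothers_corollary_univariate (k m r : ℕ) (hk : 1 ≤ k) (hm : 1 ≤ m) (hr : 1 ≤ r)
    (habc : (1 : ℚ) / k + 1 / m + 1 / r ≤ 1)
    (P Q R : Polynomial ℂ) (heq : P ^ k + Q ^ m = R ^ r)
    (hcop : ¬ ∃ q : Polynomial ℂ, Irreducible q ∧ q ∣ P ∧ q ∣ Q ∧ q ∣ R) :
    P.natDegree = 0 ∧ Q.natDegree = 0 ∧ R.natDegree = 0 := by
  have hk0 : k ≠ 0 := by omega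
  have hm0 : m ≠ 0 := by omega
  have hr0 : r ≠ 0 := by omega
  have hPQ : IsCoprime P Q := isCoprime_of_dvd_pow_of_no_common_irreducible_factor
    (fun q hP hQ => heq ▸ dvd_add (dvd_pow hP hk0) (dvd_pow hQ hm0)) hcop
  have hQR : IsCoprime Q R := isCoprime_of_dvd_pow_of_no_common_irreducible_factor (n := k)
    (fun q hQ hR => (dvd_add_left (dvd_pow hQ hm0)).mp (heq ▸ dvd_pow hR hr0))
    fun ⟨q, hq, hQ, hR, hP⟩ => hcop ⟨q, hq, hP, hQ, hR⟩
  have hRP : IsCoprime R P := isCoprime_of_dvd_pow_of_no_common_irreducible_factor (n := m)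
    (fun q hR hP => (dvd_add_right (dvd_pow hP hk0)).mp (heq ▸ dvd_pow hR hr0))
    fun ⟨q, hq, hR, hP, hQ⟩ => hcop ⟨q, hq, hP, hQ, hR⟩
  by_cases h0 : P = 0 ∨ Q = 0 ∨ R = 0
  · exact natDegree_eq_zero_of_isCoprime_of_eq_zero hPQ hQR hRP h0
  simp only [not_or] at h0
  obtain ⟨hP0, hQ0, hR0⟩ := h0
  have hsum : C 1 * P ^ k + C 1 * Q ^ m + C (-1) * R ^ r = 0 := by
    rw [map_neg, C_1]
    linear_combination heq
  exact flt_catalan hk0 hm0 hr0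
    (Nat.mul_add_mul_add_mul_le_mul_mul_of_one_div_add_le_one hk0 hm0 hr0 habc)
    (Nat.cast_ne_zero.mpr hk0) (Nat.cast_ne_zero.mpr hm0) (Nat.cast_ne_zero.mpr hr0)
    hP0 hQ0 hR0 hPQ one_ne_zero one_ne_zero (neg_ne_zero.mpr one_ne_zero) hsum
end

section
/- Let k,m,r ∈ ℕ satisfy 1/k + 1/m + 1/r ≤ 1, let ℓ = lcm(k,m), g = gcd(k,m), and assume ℓ ∣ r. If P, Q, R ∈ ℂ[X₁,…,Xₙ] with R ≠ 0 satisfy P^k + Q^m = R^r, then there exist α₁, α₂ ∈ ℂ such that P = α₁·R^{(m/g)(r/ℓ)} and Q = α₂·R^{(k/g)(r/ℓ)}. -/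
/-!
Write `ℓ = lcm k m`. If a prime `p` divides both `P` and `Q` in `P ^ k + Q ^ m = S ^ ℓ`, compare
`p`-adic valuations: when those of `P ^ k` and `Q ^ m` differ, the smaller one is the valuation of
`S ^ ℓ`, a multiple of `ℓ`; when they agree, it is a common multiple of `k` and `m`. Either way
`p ^ (ℓ / k) ∣ P`, `p ^ (ℓ / m) ∣ Q` and `p ∣ S`, and `p` can be divided out of the equation.
Descending along the divisors of `S` gives `P = T ^ (ℓ / k) * P'`, `Q = T ^ (ℓ / m) * Q'`,
`S = T * S'` with `P'`, `Q'` relatively prime. For such a solution, Mason–Stothers applied in each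
variable separately, over the fraction field of the polynomial ring in the other variables, makes
`P'`, `Q'`, `S'` constant: its exponent condition `1/k + 1/m + 1/ℓ ≤ 1` follows from
`1/k + 1/m < 1` because `gcd k m` divides the positive number `k * m - k - m`. The theorem is the
case `S = R ^ (r / ℓ)`.
-/

open MvPolynomial

theorem Nat.mul_lcm_add_lcm_mul_add_mul_le_of_add_lt_mul {k m : ℕ} (h : k + m < k * m) :
    m * Nat.lcm k m + Nat.lcm k m * k + k * m ≤ k * m * Nat.lcm k m := by
  have hg : Nat.gcd k m ≤ k * m - (k + m) :=
    Nat.le_of_dvd (by omega) (Nat.dvd_sub ((Nat.gcd_dvd_left k m).mul_right m)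
      (dvd_add (Nat.gcd_dvd_left k m) (Nat.gcd_dvd_right k m)))
  calc m * Nat.lcm k m + Nat.lcm k m * k + k * m
      = (k + m + Nat.gcd k m) * Nat.lcm k m := by rw [← Nat.gcd_mul_lcm k m]; ring
    _ ≤ k * m * Nat.lcm k m := Nat.mul_le_mul_right _ (by omega)

theorem Nat.lcm_div_left_eq_div_gcd {k m : ℕ} (hk : k ≠ 0) : Nat.lcm k m / k = m / Nat.gcd k m := by
  rw [Nat.lcm, Nat.mul_div_assoc k (Nat.gcd_dvd_right k m),
    Nat.mul_div_cancel_left _ (Nat.pos_of_ne_zero hk)]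

theorem Prime.lcm_le_mul_emultiplicity {A : Type*} [CommRing A] [IsDomain A] {p : A}
    (hp : Prime p) {k m : ℕ} (hk : k ≠ 0) (hm : m ≠ 0) {x y z : A} (hx : p ∣ x) (hy : p ∣ y)
    (h : x ^ k + y ^ m = z ^ Nat.lcm k m) :
    (Nat.lcm k m : ℕ∞) ≤ k * emultiplicity p x ∧ (Nat.lcm k m : ℕ∞) ≤ m * emultiplicity p y := by
  wlog hle : k * emultiplicity p x ≤ m * emultiplicity p y generalizing x y k m
  · have := this hm hk hy hx (by rwa [add_comm, Nat.lcm_comm]) (le_of_not_ge hle)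
    rwa [Nat.lcm_comm, and_comm] at this
  suffices hL : (Nat.lcm k m : ℕ∞) ≤ k * emultiplicity p x from ⟨hL, hL.trans hle⟩
  have hx1 : 1 ≤ emultiplicity p x := le_emultiplicity_of_pow_dvd (by rwa [pow_one])
  rcases hle.lt_or_eq with hlt | hkm
  · have hz : Nat.lcm k m * emultiplicity p z = k * emultiplicity p x := by
      rw [← emultiplicity_pow hp, ← h, add_comm, emultiplicity_add_of_gt, emultiplicity_pow hp]
      rwa [emultiplicity_pow hp, emultiplicity_pow hp]
    rw [← hz]
    refine le_mul_of_one_le_right' (Order.one_le_iff_ne_zero.mpr fun hz0 ↦ ?_)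
    rw [hz0, mul_zero, eq_comm, mul_eq_zero] at hz
    exact hz.elim (by exact_mod_cast hk) (fun h0 ↦ by simp [h0] at hx1)
  · rcases eq_or_ne (emultiplicity p x) ⊤ with htop | hfin
    · simp [htop, ENat.mul_top (Nat.cast_ne_zero.mpr hk)]
    obtain ⟨a, ha⟩ := ENat.ne_top_iff_exists.mp hfin
    obtain ⟨b, hb⟩ : ∃ b : ℕ, ↑b = emultiplicity p y := ENat.ne_top_iff_exists.mp fun htop ↦ by
      rw [htop, ENat.mul_top (Nat.cast_ne_zero.mpr hm), ← ha] at hkm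
      exact ENat.natCast_ne_top _ (by exact_mod_cast hkm)
    rw [← ha, ← hb] at hkm
    rw [← ha] at hx1 ⊢
    have hkab : k * a = m * b := by exact_mod_cast hkm
    have ha0 : 0 < k * a := Nat.mul_pos (Nat.pos_of_ne_zero hk) (by exact_mod_cast hx1)
    exact_mod_cast Nat.le_of_dvd ha0 (Nat.lcm_dvd (dvd_mul_right k a) (hkab ▸ dvd_mul_right m b))

theorem Prime.exists_pow_add_pow_eq_pow_lcm_of_dvd {A : Type*} [CommRing A] [IsDomain A] {p : A}
    (hp : Prime p) {k m : ℕ} (hk : k ≠ 0) (hm : m ≠ 0) {x y z : A} (hx : p ∣ x) (hy : p ∣ y)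
    (h : x ^ k + y ^ m = z ^ Nat.lcm k m) :
    ∃ x' y' z', x = p ^ (Nat.lcm k m / k) * x' ∧ y = p ^ (Nat.lcm k m / m) * y' ∧
      z = p * z' ∧ x' ^ k + y' ^ m = z' ^ Nat.lcm k m := by
  have hdiv {n : ℕ} {w : A} (hn : n ≠ 0) (hnL : n ∣ Nat.lcm k m)
      (hw : (Nat.lcm k m : ℕ∞) ≤ n * emultiplicity p w) : p ^ (Nat.lcm k m / n) ∣ w := by
    refine pow_dvd_of_le_emultiplicity
      ((ENat.mul_le_mul_left_iff (a := n) (by simpa) (by simp)).mp ?_)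
    rwa [← Nat.cast_mul, Nat.mul_div_cancel' hnL]
  obtain ⟨hxL, hyL⟩ := hp.lcm_le_mul_emultiplicity hk hm hx hy h
  obtain ⟨x', rfl⟩ := hdiv hk (Nat.dvd_lcm_left k m) hxL
  obtain ⟨y', rfl⟩ := hdiv hm (Nat.dvd_lcm_right k m) hyL
  obtain ⟨z', rfl⟩ : p ∣ z := hp.dvd_of_dvd_pow (h ▸ dvd_add (dvd_pow hx hk) (dvd_pow hy hm))
  refine ⟨x', y', z', rfl, rfl, rfl, mul_left_cancel₀ (pow_ne_zero (Nat.lcm k m) hp.ne_zero) ?_⟩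
  rw [mul_pow, mul_pow, mul_pow, ← pow_mul, ← pow_mul, Nat.div_mul_cancel (Nat.dvd_lcm_left k m),
    Nat.div_mul_cancel (Nat.dvd_lcm_right k m), ← mul_add] at h
  exact h

theorem exists_isRelPrime_of_pow_add_pow_eq_pow_lcm {A : Type*} [CommRing A] [IsDomain A]
    [UniqueFactorizationMonoid A] {k m : ℕ} (hk : k ≠ 0) (hm : m ≠ 0) {x y z : A} (hz : z ≠ 0)
    (h : x ^ k + y ^ m = z ^ Nat.lcm k m) :
    ∃ t x' y' z', x = t ^ (Nat.lcm k m / k) * x' ∧ y = t ^ (Nat.lcm k m / m) * y' ∧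
      z = t * z' ∧ IsRelPrime x' y' ∧ x' ^ k + y' ^ m = z' ^ Nat.lcm k m := by
  induction z using (wellFounded_dvdNotUnit (α := A)).induction generalizing x y with
  | h z ih =>
  by_cases hxy : IsRelPrime x y
  · exact ⟨1, x, y, z, by simp, by simp, by simp, hxy, h⟩
  obtain ⟨p, hp, hpx, hpy⟩ : ∃ p, Prime p ∧ p ∣ x ∧ p ∣ y := by
    have hxy0 : ¬(x = 0 ∧ y = 0) := by
      rintro ⟨rfl, rfl⟩
      rw [zero_pow hk, zero_pow hm, add_zero, eq_comm, pow_eq_zero_iff (Nat.lcm_ne_zero hk hm)] at h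
      exact hz h
    by_contra! hno
    exact hxy (WfDvdMonoid.isRelPrime_of_no_irreducible_factors hxy0 fun p hp ↦
      hno p (UniqueFactorizationMonoid.irreducible_iff_prime.mp hp))
  obtain ⟨x₁, y₁, z₁, rfl, rfl, rfl, h₁⟩ := hp.exists_pow_add_pow_eq_pow_lcm_of_dvd hk hm hpx hpy h
  have hz₁ : z₁ ≠ 0 := right_ne_zero_of_mul hz
  obtain ⟨t, x', y', z', rfl, rfl, rfl, hxy', h'⟩ :=
    ih z₁ ⟨hz₁, p, hp.not_isUnit, mul_comm p z₁⟩ hz₁ h₁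
  exact ⟨p * t, x', y', z', by ring, by ring, by ring, hxy', h'⟩

open Polynomial IsLocalization nonZeroDivisors in
theorem IsRelPrime.fraction_map {R : Type*} [CommRing R] [IsDomain R] [IsGCDMonoid R]
    (K : Type*) [Field K] [Algebra R K] [IsFractionRing R K] {f g : R[X]}
    (h : IsRelPrime f g) : IsRelPrime (f.map (algebraMap R K)) (g.map (algebraMap R K)) := by
  let : NormalizedGCDMonoid R := Nonempty.some inferInstance
  have hinj := Polynomial.map_injective (algebraMap R K) (IsFractionRing.injective R K)
  intro d hdf hdg
  have hd : d ≠ 0 := by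
    rintro rfl
    obtain ⟨rfl⟩ : f = 0 := hinj (by simpa using hdf)
    obtain ⟨rfl⟩ : g = 0 := hinj (by simpa using hdg)
    exact not_isRelPrime_zero_zero h
  -- a primitive integral model of `d`; by Gauss's lemma it divides `f` and `g`
  set d₀ := (integerNormalization R⁰ d).primPart
  have hd₀ : d₀.map (algebraMap R K) ∣ d := by
    obtain ⟨b, hb0, hb⟩ := integerNormalization_spec R⁰ d
    have hunit : IsUnit (Polynomial.C (algebraMap R K b)) :=
      Polynomial.isUnit_C.mpr <| isUnit_iff_ne_zero.mpr <|
        IsFractionRing.to_map_ne_zero_of_mem_nonZeroDivisors hb0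
    rw [← hunit.dvd_mul_left, ← Polynomial.smul_eq_C_mul, algebraMap_smul, ← hb]
    exact Polynomial.map_dvd _ (primPart_dvd _)
  have hprim := isPrimitive_primPart (integerNormalization R⁰ d)
  exact isUnit_or_eq_zero_of_isUnit_integerNormalization_primPart hd
    (h (hprim.dvd_of_fraction_map_dvd_fraction_map (hd₀.trans hdf))
      (hprim.dvd_of_fraction_map_dvd_fraction_map (hd₀.trans hdg)))

theorem MvPolynomial.eq_C_of_forall_degreeOf_eq_zero {σ R : Type*} [CommSemiring R]
    {p : MvPolynomial σ R} (h : ∀ i, p.degreeOf i = 0) : p = C (p.coeff 0) :=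
  vars_eq_empty_iff_eq_C.mp <| Finset.eq_empty_of_forall_notMem fun i hi ↦
    mem_vars_iff_degreeOf_ne_zero.mp hi (h i)

open Polynomial in
theorem MvPolynomial.flt_catalan {σ K : Type*} [Field K] [CharZero K] {p q r : ℕ}
    (hp : p ≠ 0) (hq : q ≠ 0) (hr : r ≠ 0) (hineq : q * r + r * p + p * q ≤ p * q * r)
    {a b c : MvPolynomial σ K} (ha : a ≠ 0) (hb : b ≠ 0) (hc : c ≠ 0) (hab : IsRelPrime a b)
    (heq : a ^ p + b ^ q = c ^ r) :
    a = C (a.coeff 0) ∧ b = C (b.coeff 0) ∧ c = C (c.coeff 0) := by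
  classical
  suffices h : ∀ i, a.degreeOf i = 0 ∧ b.degreeOf i = 0 ∧ c.degreeOf i = 0 from
    ⟨eq_C_of_forall_degreeOf_eq_zero fun i ↦ (h i).1,
      eq_C_of_forall_degreeOf_eq_zero fun i ↦ (h i).2.1,
      eq_C_of_forall_degreeOf_eq_zero fun i ↦ (h i).2.2⟩
  intro i
  let A := MvPolynomial {j // j ≠ i} K
  let e : MvPolynomial σ K ≃ₐ[K] A[X] :=
    (renameEquiv K (Equiv.optionSubtypeNe i).symm).trans (optionEquivLeft K _)
  let Φ : MvPolynomial σ K →+* (FractionRing A)[X] :=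
    (mapRingHom (algebraMap A (FractionRing A))).comp e.toRingHom
  have hΦ : Function.Injective Φ :=
    (Polynomial.map_injective _ (IsFractionRing.injective A (FractionRing A))).comp e.injective
  have hdeg (f : MvPolynomial σ K) : (Φ f).natDegree = f.degreeOf i := by
    rw [degreeOf_eq_natDegree]
    exact natDegree_map_eq_of_injective (IsFractionRing.injective _ _) _
  have hcop : IsCoprime (Φ a) (Φ b) :=
    ((IsRelPrime.of_map e.symm (by simpa using hab)).fraction_map _).isCoprime
  have heqΦ : Φ a ^ p + Φ b ^ q = Φ c ^ r := by simp only [← map_pow, ← map_add, heq]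
  simpa only [hdeg] using Polynomial.flt_catalan hp hq hr hineq (by exact_mod_cast hp)
    (by exact_mod_cast hq) (by exact_mod_cast hr) ((map_ne_zero_iff Φ hΦ).mpr ha)
    ((map_ne_zero_iff Φ hΦ).mpr hb) ((map_ne_zero_iff Φ hΦ).mpr hc) hcop
    one_ne_zero one_ne_zero (neg_ne_zero.mpr one_ne_zero)
    (by simp only [map_one, map_neg, one_mul]; linear_combination heqΦ)

theorem MvPolynomial.eq_C_of_isRelPrime_of_pow_add_pow_eq_pow {σ K : Type*} [Field K] [CharZero K]
    {p q r : ℕ} (hp : p ≠ 0) (hq : q ≠ 0) (hr : r ≠ 0) (hineq : q * r + r * p + p * q ≤ p * q * r)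
    {a b c : MvPolynomial σ K} (hab : IsRelPrime a b) (hc : c ≠ 0) (heq : a ^ p + b ^ q = c ^ r) :
    a = C (a.coeff 0) ∧ b = C (b.coeff 0) ∧ c = C (c.coeff 0) := by
  have eq_C_of_isUnit {f : MvPolynomial σ K} (hf : IsUnit f) : f = C (f.coeff 0) :=
    totalDegree_eq_zero_iff_eq_C.mp (isUnit_iff_totalDegree_of_isReduced.mp hf).2
  rcases eq_or_ne a 0 with rfl | ha
  · have hb := isRelPrime_zero_left.mp hab
    refine ⟨by simp, eq_C_of_isUnit hb, eq_C_of_isUnit ((isUnit_pow_iff hr).mp ?_)⟩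
    rw [← heq, zero_pow hp, zero_add]
    exact hb.pow q
  rcases eq_or_ne b 0 with rfl | hb
  · have ha := isRelPrime_zero_right.mp hab
    refine ⟨eq_C_of_isUnit ha, by simp, eq_C_of_isUnit ((isUnit_pow_iff hr).mp ?_)⟩
    rw [← heq, zero_pow hq, add_zero]
    exact ha.pow p
  exact flt_catalan hp hq hr hineq ha hb hc hab heq

theorem MvPolynomial.exists_eq_C_mul_pow_of_pow_add_pow_eq_pow_lcm {σ K : Type*} [Field K]
    [CharZero K] {k m : ℕ} (hkm : k + m < k * m) {P Q S : MvPolynomial σ K} (hS : S ≠ 0)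
    (h : P ^ k + Q ^ m = S ^ Nat.lcm k m) :
    ∃ α β : K, P = C α * S ^ (Nat.lcm k m / k) ∧ Q = C β * S ^ (Nat.lcm k m / m) := by
  have hk : k ≠ 0 := by rintro rfl; simp at hkm
  have hm : m ≠ 0 := by rintro rfl; simp at hkm
  obtain ⟨t, P', Q', S', rfl, rfl, rfl, hPQ, h'⟩ :=
    exists_isRelPrime_of_pow_add_pow_eq_pow_lcm hk hm hS h
  obtain ⟨hP', hQ', hS'⟩ := eq_C_of_isRelPrime_of_pow_add_pow_eq_pow hk hm (Nat.lcm_ne_zero hk hm)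
    (Nat.mul_lcm_add_lcm_mul_add_mul_le_of_add_lt_mul hkm) hPQ (right_ne_zero_of_mul hS) h'
  set s := S'.coeff 0
  have hs : s ≠ 0 := fun h0 ↦ hS (by rw [hS', h0, C_0, mul_zero])
  have hrescale (n : ℕ) (c : K) : t ^ n * C c = C (c / s ^ n) * (t * C s) ^ n := by
    rw [mul_pow, ← C_pow, mul_left_comm, ← C_mul, div_mul_cancel₀ _ (pow_ne_zero n hs)]
  exact ⟨_, _, by rw [hP', hS', hrescale], by rw [hQ', hS', hrescale]⟩

/-- Generalized Mason–Stothers corollary: if `1/k + 1/m + 1/r ≤ 1`, `ℓ = lcm(k,m)`,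
`g = gcd(k,m)`, `ℓ ∣ r`, and `P^k + Q^m = R^r` with `R ≠ 0`, then `P = α₁ R^{(m/g)(r/ℓ)}`
and `Q = α₂ R^{(k/g)(r/ℓ)}` for some constants `α₁, α₂ ∈ ℂ`. -/
theorem masonStothers_power_corollary (n : ℕ) (k m r : ℕ)
    (hk : 1 ≤ k) (hm : 1 ≤ m) (hr : 1 ≤ r)
    (habc : (1 : ℚ) / k + 1 / m + 1 / r ≤ 1)
    (hdvd : Nat.lcm k m ∣ r)
    (P Q R : MvPolynomial (Fin n) ℂ) (hR : R ≠ 0) (heq : P ^ k + Q ^ m = R ^ r) :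
    ∃ α₁ α₂ : ℂ,
      P = MvPolynomial.C α₁ * R ^ ((m / Nat.gcd k m) * (r / Nat.lcm k m)) ∧
      Q = MvPolynomial.C α₂ * R ^ ((k / Nat.gcd k m) * (r / Nat.lcm k m)) := by
  have hkm : k + m < k * m := by
    have hr' : (0 : ℚ) < 1 / r := by positivity
    have : (1 : ℚ) / k + 1 / m < 1 := by linarith
    rw [div_add_div _ _ (by positivity) (by positivity), div_lt_one (by positivity)] at this
    exact_mod_cast (by linarith : (k + m : ℚ) < k * m)
  have heq' : P ^ k + Q ^ m = (R ^ (r / Nat.lcm k m)) ^ Nat.lcm k m := by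
    rw [← pow_mul, Nat.div_mul_cancel hdvd, heq]
  obtain ⟨α₁, α₂, hP, hQ⟩ :=
    exists_eq_C_mul_pow_of_pow_add_pow_eq_pow_lcm hkm (pow_ne_zero _ hR) heq'
  refine ⟨α₁, α₂, ?_, ?_⟩
  · rw [hP, ← pow_mul, Nat.lcm_div_left_eq_div_gcd (by omega), mul_comm (r / _)]
  · rw [hQ, ← pow_mul, Nat.lcm_comm, Nat.lcm_div_left_eq_div_gcd (by omega), Nat.gcd_comm,
      Nat.lcm_comm, mul_comm (r / _)]
end

section
/- Let E_ω : Y² = X³ + A(ω)X + B(ω) be an elliptic curve over ℚ with A(ω), B(ω) values of polynomials A, B ∈ ℤ[T₁,…,Tₙ] at ω ∈ ℚⁿ with Δ_E(ω) ≠ 0. Then there exist constants c₁, c₂ > 0 depending only on A and B such that for every point p ∈ E_ω(ℚ) with [2]p ≠ O, the naive heights satisfy h_{E_ω}([2]p) − 4·h_{E_ω}(p) ≤ c₁·h(ω) + c₂, where h_{E_ω}(q) = h([x(q):1]) is the logarithmic Weil height of the x-coordinate and h(ω) is the logarithmic height of ω ∈ ℙⁿ(ℚ). -/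
open Finset

/-- The logarithmic Weil height of a rational number `q = a/b` in lowest terms:
`log max(|a|, b)`. -/
noncomputable def ratHeight (q : ℚ) : ℝ := Real.log ((max |q.num| (q.den : ℤ) : ℤ) : ℝ)

/-- The integer `H(ω)` for `ω ∈ ℚⁿ`: with `ℓ` the lcm of the denominators of the `ω_i`,
the point `[1 : ω₁ : ⋯ : ωₙ]` has coprime integer coordinates `(ℓ, ω₁ℓ, …, ωₙℓ)` and
`H(ω)` is the maximum of their absolute values. -/
def projHeightZ {n : ℕ} (ω : Fin n → ℚ) : ℤ :=
  max ((Finset.univ : Finset (Fin n)).lcm fun i => ((ω i).den : ℤ))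
    (((Finset.univ : Finset (Fin n)).sup fun i =>
      (ω i * (((Finset.univ : Finset (Fin n)).lcm fun j => ((ω j).den : ℤ) : ℤ) : ℚ)).num.natAbs : ℕ) : ℤ)

/-- The logarithmic height `h(ω) = log H(ω)` of `ω ∈ ℚⁿ` viewed in `ℙⁿ(ℚ)`. -/
noncomputable def projHeight {n : ℕ} (ω : Fin n → ℚ) : ℝ := Real.log ((projHeightZ ω : ℤ) : ℝ)

/-! ### Auxiliary definitions and lemmas -/

/-- The lcm of the denominators of the coordinates of `ω`. -/
def nhdbEll {n : ℕ} (ω : Fin n → ℚ) : ℤ :=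
  (Finset.univ : Finset (Fin n)).lcm fun i => ((ω i).den : ℤ)

lemma nhdbEll_pos {n : ℕ} (ω : Fin n → ℚ) : 0 < nhdbEll ω := by
  have h0 : nhdbEll ω ≠ 0 := by
    rw [nhdbEll, Ne, Finset.lcm_eq_zero_iff]
    rintro ⟨i, -, hi⟩
    simp only [Nat.cast_eq_zero] at hi
    exact (ω i).den_ne_zero hi
  have h1 : 0 ≤ nhdbEll ω := by
    rw [nhdbEll, ← Finset.normalize_lcm, ← Int.abs_eq_normalize]; positivity
  omega

lemma nhdbProjHeightZ_eq {n : ℕ} (ω : Fin n → ℚ) :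
    projHeightZ ω = max (nhdbEll ω)
      (((Finset.univ : Finset (Fin n)).sup fun i =>
        (ω i * ((nhdbEll ω : ℤ) : ℚ)).num.natAbs : ℕ) : ℤ) := rfl

lemma nhdbEll_le {n : ℕ} (ω : Fin n → ℚ) : nhdbEll ω ≤ projHeightZ ω := by
  rw [nhdbProjHeightZ_eq]; exact le_max_left _ _

lemma nhdbH_pos {n : ℕ} (ω : Fin n → ℚ) : 0 < projHeightZ ω :=
  (nhdbEll_pos ω).trans_le (nhdbEll_le ω)

lemma nhdb_z_cast {n : ℕ} (ω : Fin n → ℚ) (i : Fin n) :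
    (((ω i * ((nhdbEll ω : ℤ) : ℚ)).num : ℤ) : ℚ) = ω i * ((nhdbEll ω : ℤ) : ℚ) := by
  obtain ⟨t, ht⟩ : ((ω i).den : ℤ) ∣ nhdbEll ω := Finset.dvd_lcm (Finset.mem_univ i)
  have hden : ((ω i).den : ℚ) ≠ 0 := by
    exact_mod_cast (ω i).den_ne_zero
  have h1 : ((ω i).num : ℚ) = ω i * ((ω i).den : ℚ) :=
    (div_eq_iff hden).mp (Rat.num_div_den (ω i))
  have hkey : ω i * ((nhdbEll ω : ℤ) : ℚ) = (((ω i).num * t : ℤ) : ℚ) := by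
    rw [ht]
    push_cast
    rw [h1]
    ring
  rw [hkey, Rat.num_intCast]

lemma nhdb_z_le {n : ℕ} (ω : Fin n → ℚ) (i : Fin n) :
    |(ω i * ((nhdbEll ω : ℤ) : ℚ)).num| ≤ projHeightZ ω := by
  have h := Finset.le_sup (f := fun i => (ω i * ((nhdbEll ω : ℤ) : ℚ)).num.natAbs)
    (Finset.mem_univ i)
  calc |(ω i * ((nhdbEll ω : ℤ) : ℚ)).num|
      = ((ω i * ((nhdbEll ω : ℤ) : ℚ)).num.natAbs : ℤ) := Int.abs_eq_natAbs _
    _ ≤ (((Finset.univ : Finset (Fin n)).sup fun i =>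
          (ω i * ((nhdbEll ω : ℤ) : ℚ)).num.natAbs : ℕ) : ℤ) := by exact_mod_cast h
    _ ≤ projHeightZ ω := by rw [nhdbProjHeightZ_eq]; exact le_max_right _ _

/-- Key lemma: `A(ω) ℓ^D` is an integer of absolute value at most `N_A · H(ω)^D`. -/
lemma nhdb_aeval_bound {n : ℕ} (P : MvPolynomial (Fin n) ℤ) (ω : Fin n → ℚ) (D : ℕ)
    (hD : P.totalDegree ≤ D) :
    ∃ α : ℤ, (α : ℚ) = MvPolynomial.aeval ω P * ((nhdbEll ω : ℤ) : ℚ) ^ D ∧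
      |α| ≤ (∑ m ∈ P.support, |P.coeff m|) * projHeightZ ω ^ D := by
  classical
  refine ⟨∑ m ∈ P.support, P.coeff m *
      ((∏ i ∈ m.support, (ω i * ((nhdbEll ω : ℤ) : ℚ)).num ^ m i) *
        nhdbEll ω ^ (D - m.sum fun _ e => e)), ?_, ?_⟩
  · rw [MvPolynomial.aeval_def, MvPolynomial.eval₂_eq, Finset.sum_mul]
    push_cast
    refine Finset.sum_congr rfl fun m hm => ?_
    have hms : (m.sum fun _ e => e) ≤ D := le_trans (MvPolynomial.le_totalDegree hm) hD
    simp only [algebraMap_int_eq, eq_intCast]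
    have hz : ∀ i ∈ m.support,
        (((ω i * ((nhdbEll ω : ℤ) : ℚ)).num : ℤ) : ℚ) ^ m i
          = ω i ^ m i * ((nhdbEll ω : ℤ) : ℚ) ^ m i := fun i _ => by
      rw [nhdb_z_cast, mul_pow]
    rw [Finset.prod_congr rfl hz, Finset.prod_mul_distrib, Finset.prod_pow_eq_pow_sum]
    rw [show (∑ i ∈ m.support, m i) = m.sum fun _ e => e from rfl]
    rw [mul_assoc, ← pow_add, Nat.add_sub_cancel' hms]
    ring
  · refine le_trans (Finset.abs_sum_le_sum_abs _ _) ?_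
    rw [Finset.sum_mul]
    refine Finset.sum_le_sum fun m hm => ?_
    have hms : (m.sum fun _ e => e) ≤ D := le_trans (MvPolynomial.le_totalDegree hm) hD
    have hH0 : (0 : ℤ) ≤ projHeightZ ω := (nhdbH_pos ω).le
    rw [abs_mul]
    refine mul_le_mul_of_nonneg_left ?_ (abs_nonneg _)
    rw [abs_mul, Finset.abs_prod, abs_pow]
    have h1 : (∏ i ∈ m.support, |(ω i * ((nhdbEll ω : ℤ) : ℚ)).num ^ m i|)
        ≤ ∏ i ∈ m.support, projHeightZ ω ^ m i :=
      Finset.prod_le_prod (fun i _ => abs_nonneg _) (fun i _ => by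
        rw [abs_pow]; exact pow_le_pow_left₀ (abs_nonneg _) (nhdb_z_le ω i) _)
    have h2 : |nhdbEll ω| ^ (D - m.sum fun _ e => e)
        ≤ projHeightZ ω ^ (D - m.sum fun _ e => e) :=
      pow_le_pow_left₀ (abs_nonneg _)
        (by rw [abs_of_nonneg (nhdbEll_pos ω).le]; exact nhdbEll_le ω) _
    calc (∏ i ∈ m.support, |(ω i * ((nhdbEll ω : ℤ) : ℚ)).num ^ m i|)
          * |nhdbEll ω| ^ (D - m.sum fun _ e => e)
        ≤ (∏ i ∈ m.support, projHeightZ ω ^ m i)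
          * projHeightZ ω ^ (D - m.sum fun _ e => e) :=
          mul_le_mul h1 h2 (pow_nonneg (abs_nonneg _) _)
            (Finset.prod_nonneg fun i _ => pow_nonneg hH0 _)
      _ = projHeightZ ω ^ (m.sum fun _ e => e)
          * projHeightZ ω ^ (D - m.sum fun _ e => e) := by
          rw [Finset.prod_pow_eq_pow_sum]
          rfl
      _ = projHeightZ ω ^ D := by rw [← pow_add, Nat.add_sub_cancel' hms]

lemma nhdb_ratHeight_div_le (P Q : ℤ) (hQ : Q ≠ 0) :
    ratHeight ((P : ℚ) / (Q : ℚ)) ≤ Real.log ((max |P| |Q| : ℤ) : ℝ) := by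
  have hq : ((P : ℚ) / (Q : ℚ)) = Rat.divInt P Q := (Rat.divInt_eq_div P Q).symm
  have hnum : |((P : ℚ) / (Q : ℚ)).num| ≤ |P| := by
    rcases eq_or_ne P 0 with h | h
    · simp [h]
    · have hd : ((P : ℚ) / (Q : ℚ)).num ∣ P := by rw [hq]; exact Rat.num_dvd P hQ
      exact Int.le_of_dvd (abs_pos.mpr h) ((abs_dvd _ _).mpr ((dvd_abs _ _).mpr hd))
  have hden : ((((P : ℚ) / (Q : ℚ)).den : ℕ) : ℤ) ≤ |Q| := by
    have hd : ((((P : ℚ) / (Q : ℚ)).den : ℕ) : ℤ) ∣ Q := by rw [hq]; exact Rat.den_dvd P Q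
    exact Int.le_of_dvd (abs_pos.mpr hQ) ((dvd_abs _ _).mpr hd)
  have h1 : (0 : ℤ) < max |((P : ℚ) / (Q : ℚ)).num| ((((P : ℚ) / (Q : ℚ)).den : ℕ) : ℤ) :=
    lt_of_lt_of_le (by exact_mod_cast ((P : ℚ) / (Q : ℚ)).pos) (le_max_right _ _)
  rw [ratHeight]
  apply Real.log_le_log
  · exact_mod_cast h1
  · exact_mod_cast max_le_max hnum hden

lemma nhdb_abs_mul_le {u v U V : ℤ} (hu : |u| ≤ U) (hv : |v| ≤ V) : |u * v| ≤ U * V := by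
  rw [abs_mul]
  exact mul_le_mul hu hv (abs_nonneg _) ((abs_nonneg _).trans hu)

set_option maxHeartbeats 1000000 in
/-- For the family `E_ω : Y² = X³ + A(ω) X + B(ω)` with `A, B ∈ ℤ[T₁,…,Tₙ]`, there are
constants `c₁, c₂ > 0` depending only on `A` and `B` such that for every `ω ∈ ℚⁿ` with
`Δ_E(ω) ≠ 0` and every point `p = (x, y) ∈ E_ω(ℚ)` with `[2]p ≠ O` (i.e. `y ≠ 0`),
`h_{E_ω}([2]p) - 4 h_{E_ω}(p) ≤ c₁ h(ω) + c₂`, heights being the logarithmic heights of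
the `x`-coordinates. -/
theorem naive_height_double_bound (n : ℕ) (A B : MvPolynomial (Fin n) ℤ) :
    ∃ c₁ : ℝ, 0 < c₁ ∧ ∃ c₂ : ℝ, 0 < c₂ ∧ ∀ ω : Fin n → ℚ,
      -16 * (4 * (MvPolynomial.aeval ω A) ^ 3 + 27 * (MvPolynomial.aeval ω B) ^ 2) ≠ 0 →
      ∀ x y : ℚ,
        y ^ 2 = x ^ 3 + (MvPolynomial.aeval ω A) * x + (MvPolynomial.aeval ω B) →
        y ≠ 0 →
        ratHeight ((x ^ 4 - 2 * (MvPolynomial.aeval ω A) * x ^ 2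
              - 8 * (MvPolynomial.aeval ω B) * x + (MvPolynomial.aeval ω A) ^ 2) /
            (4 * x ^ 3 + 4 * (MvPolynomial.aeval ω A) * x + 4 * (MvPolynomial.aeval ω B)))
          - 4 * ratHeight x
          ≤ c₁ * projHeight ω + c₂ := by
  classical
  set D : ℕ := max A.totalDegree B.totalDegree with hDdef
  set NA : ℤ := ∑ m ∈ A.support, |A.coeff m| with hNAdef
  set NB : ℤ := ∑ m ∈ B.support, |B.coeff m| with hNBdef
  set N : ℤ := NA + NB + 1 with hNdef
  have hNA0 : 0 ≤ NA := Finset.sum_nonneg fun m _ => abs_nonneg _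
  have hNB0 : 0 ≤ NB := Finset.sum_nonneg fun m _ => abs_nonneg _
  have hN1 : 1 ≤ N := by omega
  have hlogN : 0 ≤ Real.log (N : ℝ) := Real.log_nonneg (by exact_mod_cast hN1)
  have hlog12 : 0 < Real.log 12 := Real.log_pos (by norm_num)
  refine ⟨2 * D + 1, by positivity, 2 * Real.log (N : ℝ) + Real.log 12, by linarith, ?_⟩
  intro ω hΔ x y h_eq hy
  set A' : ℚ := MvPolynomial.aeval ω A with hA'def
  set B' : ℚ := MvPolynomial.aeval ω B with hB'def
  set E : ℤ := nhdbEll ω with hEdef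
  set H : ℤ := projHeightZ ω with hHdef
  have hH1 : (1 : ℤ) ≤ H := nhdbH_pos ω
  have hH0 : (0 : ℤ) ≤ H := by omega
  have hE0 : (0 : ℤ) ≤ E := (nhdbEll_pos ω).le
  have hEne : ((E : ℤ) : ℚ) ≠ 0 := by exact_mod_cast (nhdbEll_pos ω).ne'
  obtain ⟨α, hα, hαb⟩ := nhdb_aeval_bound A ω D (le_max_left _ _)
  obtain ⟨β, hβ, hβb⟩ := nhdb_aeval_bound B ω D (le_max_right _ _)
  rw [← hA'def, ← hEdef] at hα
  rw [← hNAdef, ← hHdef] at hαb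
  rw [← hB'def, ← hEdef] at hβ
  rw [← hNBdef, ← hHdef] at hβb
  have hHD1 : (1 : ℤ) ≤ H ^ D := one_le_pow₀ hH1
  have hHD0 : (0 : ℤ) ≤ H ^ D := by omega
  set C : ℤ := N * H ^ D with hCdef
  have hC1 : (1 : ℤ) ≤ C := by
    rw [hCdef]
    calc (1 : ℤ) = 1 * 1 := by norm_num
      _ ≤ N * H ^ D := mul_le_mul hN1 hHD1 (by norm_num) (by omega)
  have hαC : |α| ≤ C := by
    rw [hCdef]
    exact hαb.trans (mul_le_mul_of_nonneg_right (by omega) hHD0)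
  have hβC : |β| ≤ C := by
    rw [hCdef]
    exact hβb.trans (mul_le_mul_of_nonneg_right (by omega) hHD0)
  have hEH : E ≤ H := by rw [hEdef, hHdef]; exact nhdbEll_le ω
  have hLC : E ^ D ≤ C := by
    rw [hCdef]
    exact (pow_le_pow_left₀ hE0 hEH D).trans (le_mul_of_one_le_left hHD0 hN1)
  have hLabs : |E ^ D| ≤ C := by rwa [abs_of_nonneg (pow_nonneg hE0 D)]
  -- the point
  set a : ℤ := x.num with hadef
  set b : ℤ := (x.den : ℤ) with hbdef
  have hb1 : (1 : ℤ) ≤ b := by rw [hbdef]; exact_mod_cast x.pos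
  set M : ℤ := max |a| b with hMdef
  have haM : |a| ≤ M := le_max_left _ _
  have hbM : |b| ≤ M := by rw [abs_of_nonneg (by omega)]; exact le_max_right _ _
  have hM1 : (1 : ℤ) ≤ M := hb1.trans (le_max_right _ _)
  have hb0 : ((x.den : ℕ) : ℚ) ≠ 0 := by exact_mod_cast x.den_ne_zero
  have hx' : (x.num : ℚ) = x * (x.den : ℚ) :=
    (div_eq_iff hb0).mp (Rat.num_div_den x)
  have hden4 : (4 * x ^ 3 + 4 * A' * x + 4 * B') = 4 * y ^ 2 := by
    linear_combination (-4 : ℚ) * h_eq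
  have hdne : (4 * x ^ 3 + 4 * A' * x + 4 * B') ≠ 0 := by
    rw [hden4]
    exact mul_ne_zero (by norm_num) (pow_ne_zero 2 hy)
  set P : ℤ := (E ^ D) ^ 2 * a ^ 4 - 2 * α * E ^ D * a ^ 2 * b ^ 2
      - 8 * β * E ^ D * a * b ^ 3 + α ^ 2 * b ^ 4 with hPdef
  set Q : ℤ := 4 * (E ^ D) ^ 2 * a ^ 3 * b + 4 * α * E ^ D * a * b ^ 3
      + 4 * β * E ^ D * b ^ 4 with hQdef
  have hQcast : ((Q : ℤ) : ℚ) = 4 * y ^ 2 * (x.den : ℚ) ^ 4 * (((E : ℤ) : ℚ) ^ D) ^ 2 := by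
    rw [hQdef, hadef, hbdef, ← hden4]
    push_cast
    rw [hx', hα, hβ]
    ring
  have hQne : ((Q : ℤ) : ℚ) ≠ 0 := by
    rw [hQcast]
    exact mul_ne_zero (mul_ne_zero (mul_ne_zero (by norm_num) (pow_ne_zero 2 hy))
      (pow_ne_zero 4 hb0)) (pow_ne_zero 2 (pow_ne_zero D hEne))
  have hQZ : Q ≠ 0 := by exact_mod_cast hQne
  have h_val : (x ^ 4 - 2 * A' * x ^ 2 - 8 * B' * x + A' ^ 2)
        / (4 * x ^ 3 + 4 * A' * x + 4 * B') = (P : ℚ) / (Q : ℚ) := by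
    rw [div_eq_div_iff hdne hQne, hQcast, hPdef, hadef, hbdef]
    push_cast
    rw [hx', hα, hβ, ← hden4]
    ring
  -- integer bounds
  have h2 : |(2 : ℤ)| ≤ 2 := by norm_num
  have h4 : |(4 : ℤ)| ≤ 4 := by norm_num
  have h8 : |(8 : ℤ)| ≤ 8 := by norm_num
  have hL2 : |(E ^ D) ^ 2| ≤ C ^ 2 := by
    rw [abs_pow]; exact pow_le_pow_left₀ (abs_nonneg _) hLabs 2
  have hα2 : |α ^ 2| ≤ C ^ 2 := by
    rw [abs_pow]; exact pow_le_pow_left₀ (abs_nonneg _) hαC 2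
  have ha2 : |a ^ 2| ≤ M ^ 2 := by
    rw [abs_pow]; exact pow_le_pow_left₀ (abs_nonneg _) haM 2
  have ha3 : |a ^ 3| ≤ M ^ 3 := by
    rw [abs_pow]; exact pow_le_pow_left₀ (abs_nonneg _) haM 3
  have ha4 : |a ^ 4| ≤ M ^ 4 := by
    rw [abs_pow]; exact pow_le_pow_left₀ (abs_nonneg _) haM 4
  have hb2 : |b ^ 2| ≤ M ^ 2 := by
    rw [abs_pow]; exact pow_le_pow_left₀ (abs_nonneg _) hbM 2
  have hb3 : |b ^ 3| ≤ M ^ 3 := by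
    rw [abs_pow]; exact pow_le_pow_left₀ (abs_nonneg _) hbM 3
  have hb4 : |b ^ 4| ≤ M ^ 4 := by
    rw [abs_pow]; exact pow_le_pow_left₀ (abs_nonneg _) hbM 4
  have ht1 : |(E ^ D) ^ 2 * a ^ 4| ≤ C ^ 2 * M ^ 4 := nhdb_abs_mul_le hL2 ha4
  have ht2 : |2 * α * E ^ D * a ^ 2 * b ^ 2| ≤ 2 * C * C * M ^ 2 * M ^ 2 :=
    nhdb_abs_mul_le (nhdb_abs_mul_le (nhdb_abs_mul_le (nhdb_abs_mul_le h2 hαC) hLabs) ha2) hb2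
  have ht3 : |8 * β * E ^ D * a * b ^ 3| ≤ 8 * C * C * M * M ^ 3 :=
    nhdb_abs_mul_le (nhdb_abs_mul_le (nhdb_abs_mul_le (nhdb_abs_mul_le h8 hβC) hLabs) haM) hb3
  have ht4 : |α ^ 2 * b ^ 4| ≤ C ^ 2 * M ^ 4 := nhdb_abs_mul_le hα2 hb4
  have hs1 : |4 * (E ^ D) ^ 2 * a ^ 3 * b| ≤ 4 * C ^ 2 * M ^ 3 * M :=
    nhdb_abs_mul_le (nhdb_abs_mul_le (nhdb_abs_mul_le h4 hL2) ha3) hbM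
  have hs2 : |4 * α * E ^ D * a * b ^ 3| ≤ 4 * C * C * M * M ^ 3 :=
    nhdb_abs_mul_le (nhdb_abs_mul_le (nhdb_abs_mul_le (nhdb_abs_mul_le h4 hαC) hLabs) haM) hb3
  have hs3 : |4 * β * E ^ D * b ^ 4| ≤ 4 * C * C * M ^ 4 :=
    nhdb_abs_mul_le (nhdb_abs_mul_le (nhdb_abs_mul_le h4 hβC) hLabs) hb4
  have hPbound : |P| ≤ 12 * (C ^ 2 * M ^ 4) := by
    have e1 : 2 * C * C * M ^ 2 * M ^ 2 = 2 * (C ^ 2 * M ^ 4) := by ring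
    have e2 : 8 * C * C * M * M ^ 3 = 8 * (C ^ 2 * M ^ 4) := by ring
    have tri : |P| ≤ |(E ^ D) ^ 2 * a ^ 4| + |2 * α * E ^ D * a ^ 2 * b ^ 2|
        + |8 * β * E ^ D * a * b ^ 3| + |α ^ 2 * b ^ 4| := by
      rw [hPdef]
      calc |(E ^ D) ^ 2 * a ^ 4 - 2 * α * E ^ D * a ^ 2 * b ^ 2
            - 8 * β * E ^ D * a * b ^ 3 + α ^ 2 * b ^ 4|
          ≤ |(E ^ D) ^ 2 * a ^ 4 - 2 * α * E ^ D * a ^ 2 * b ^ 2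
            - 8 * β * E ^ D * a * b ^ 3| + |α ^ 2 * b ^ 4| := abs_add_le _ _
        _ ≤ |(E ^ D) ^ 2 * a ^ 4 - 2 * α * E ^ D * a ^ 2 * b ^ 2|
            + |8 * β * E ^ D * a * b ^ 3| + |α ^ 2 * b ^ 4| := by
            have := abs_sub ((E ^ D) ^ 2 * a ^ 4 - 2 * α * E ^ D * a ^ 2 * b ^ 2)
              (8 * β * E ^ D * a * b ^ 3)
            linarith
        _ ≤ |(E ^ D) ^ 2 * a ^ 4| + |2 * α * E ^ D * a ^ 2 * b ^ 2|
            + |8 * β * E ^ D * a * b ^ 3| + |α ^ 2 * b ^ 4| := by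
            have := abs_sub ((E ^ D) ^ 2 * a ^ 4) (2 * α * E ^ D * a ^ 2 * b ^ 2)
            linarith
    linarith [ht1, ht2, ht3, ht4, e1.le, e1.ge, e2.le, e2.ge]
  have hQbound : |Q| ≤ 12 * (C ^ 2 * M ^ 4) := by
    have e1 : 4 * C ^ 2 * M ^ 3 * M = 4 * (C ^ 2 * M ^ 4) := by ring
    have e2 : 4 * C * C * M * M ^ 3 = 4 * (C ^ 2 * M ^ 4) := by ring
    have e3 : 4 * C * C * M ^ 4 = 4 * (C ^ 2 * M ^ 4) := by ring
    have tri : |Q| ≤ |4 * (E ^ D) ^ 2 * a ^ 3 * b| + |4 * α * E ^ D * a * b ^ 3|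
        + |4 * β * E ^ D * b ^ 4| := by
      rw [hQdef]
      calc |4 * (E ^ D) ^ 2 * a ^ 3 * b + 4 * α * E ^ D * a * b ^ 3
            + 4 * β * E ^ D * b ^ 4|
          ≤ |4 * (E ^ D) ^ 2 * a ^ 3 * b + 4 * α * E ^ D * a * b ^ 3|
            + |4 * β * E ^ D * b ^ 4| := abs_add_le _ _
        _ ≤ |4 * (E ^ D) ^ 2 * a ^ 3 * b| + |4 * α * E ^ D * a * b ^ 3|
            + |4 * β * E ^ D * b ^ 4| := by
            have := abs_add_le (4 * (E ^ D) ^ 2 * a ^ 3 * b) (4 * α * E ^ D * a * b ^ 3)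
            linarith
    linarith [hs1, hs2, hs3, e1.le, e2.le, e3.le]
  have hmaxPQ : max |P| |Q| ≤ 12 * (C ^ 2 * M ^ 4) := max_le hPbound hQbound
  have hmaxpos : (0 : ℤ) < max |P| |Q| :=
    lt_of_lt_of_le (Int.one_le_abs hQZ) (le_max_right _ _)
  -- pass to real logs
  have hC0 : (0 : ℝ) < (C : ℝ) := by exact_mod_cast lt_of_lt_of_le one_pos hC1
  have hM0 : (0 : ℝ) < (M : ℝ) := by exact_mod_cast lt_of_lt_of_le one_pos hM1
  have hmain : ratHeight ((P : ℚ) / (Q : ℚ)) ≤ Real.log 12 + 2 * Real.log (C : ℝ)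
      + 4 * Real.log (M : ℝ) := by
    calc ratHeight ((P : ℚ) / (Q : ℚ)) ≤ Real.log ((max |P| |Q| : ℤ) : ℝ) :=
          nhdb_ratHeight_div_le P Q hQZ
      _ ≤ Real.log ((12 * (C ^ 2 * M ^ 4) : ℤ) : ℝ) :=
          Real.log_le_log (by exact_mod_cast hmaxpos) (by exact_mod_cast hmaxPQ)
      _ = Real.log 12 + 2 * Real.log (C : ℝ) + 4 * Real.log (M : ℝ) := by
          have hCne : ((C : ℤ) : ℝ) ≠ 0 := hC0.ne'
          have hMne : ((M : ℤ) : ℝ) ≠ 0 := hM0.ne'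
          push_cast
          rw [Real.log_mul (by norm_num)
              (mul_ne_zero (pow_ne_zero 2 hCne) (pow_ne_zero 4 hMne)),
            Real.log_mul (pow_ne_zero 2 hCne) (pow_ne_zero 4 hMne),
            Real.log_pow, Real.log_pow]
          push_cast
          ring
  have hratx : ratHeight x = Real.log ((M : ℤ) : ℝ) := by
    rw [hMdef, hadef, hbdef]
    rfl
  have hHne : ((H : ℤ) : ℝ) ≠ 0 := by
    have := nhdbH_pos ω
    rw [hHdef]
    exact_mod_cast this.ne'
  have hlogC : Real.log (C : ℝ) = Real.log (N : ℝ) + D * Real.log ((H : ℤ) : ℝ) := by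
    rw [hCdef]
    push_cast
    rw [Real.log_mul (by exact_mod_cast (lt_of_lt_of_le one_pos hN1).ne')
      (pow_ne_zero D hHne), Real.log_pow]
  have hHR1 : (1 : ℝ) ≤ ((H : ℤ) : ℝ) := by exact_mod_cast hH1
  have hlogH : 0 ≤ Real.log ((H : ℤ) : ℝ) := Real.log_nonneg hHR1
  have hproj : projHeight ω = Real.log ((H : ℤ) : ℝ) := rfl
  rw [h_val, hproj, hratx]
  rw [hlogC] at hmain
  have hfin : (2 * (D : ℝ) + 1) * Real.log ((H : ℤ) : ℝ)
      = 2 * ((D : ℝ) * Real.log ((H : ℤ) : ℝ)) + Real.log ((H : ℤ) : ℝ) := by ring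
  linarith [hmain, hlogH, hfin.le, hfin.ge]
end
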